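/- arXiv:1805.08383 — 2 statements merged into one kernel-verified Lean document; each statement's English description precedes it below -/
import Mathlib

section
/- Let M ∈ GL_n(E) be a semisimple matrix over a number field E with characteristic polynomial P(T), let S be the Zariski closure of the cyclic group generated by M, and T the identity component of S. Suppose for each real embedding E → R, some nonzero integral power of det(M) equals some nonzero integral power of |i(α)| for every root α of P(T) and every complex embedding i extending E → R. Then the torus (T ∩ SL_{n,E})° is anisotropic at every real place of E. -/
/-
Diagonalise `M` over `ℂ` at the real place `v`: `u⁻¹ M u = diag d`. The hypothesis turns into
relations `|dₗ|^(2pₗ) (det M)^mₗ = (det M)^sₗ` with `pₗ > 0`. The real matrices that `u`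
diagonalises with eigenvalues satisfying these relations form a Zariski-closed subgroup, so it
contains the image of `S`; on its determinant-one part every eigenvalue has absolute value `1`,
so that part is bounded. A real character bounded on a group takes the values `±1` only, hence is
trivial on any Zariski-connected subgroup, its level sets being closed. So every connected
subgroup of `T ∩ SL` has anisotropic image, hence so has their join `(T ∩ SL)°`, and anisotropy
passes to Zariski closures.
-/

open Matrix
open scoped MatrixGroups

noncomputable section

/-- The Zariski topology on `n × n` matrices over a commutative ring: generated by
complements of zero sets of polynomials in the entries. -/
def zariskiMatrix (n : ℕ) (R : Type) [CommRing R] :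
    TopologicalSpace (Matrix (Fin n) (Fin n) R) :=
  TopologicalSpace.generateFrom
    {s | ∃ p : MvPolynomial (Fin n × Fin n) R,
      s = {A | MvPolynomial.eval (fun q => A q.1 q.2) p ≠ 0}}

/-- The Zariski topology on `GL n R`, induced from the embedding `g ↦ (g, g⁻¹)` into
pairs of matrices. -/
def zariskiGL (n : ℕ) (R : Type) [CommRing R] : TopologicalSpace (GL (Fin n) R) :=
  TopologicalSpace.induced
    (fun g => ((g : Matrix (Fin n) (Fin n) R),
      ((g⁻¹ : GL (Fin n) R) : Matrix (Fin n) (Fin n) R)))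
    (@instTopologicalSpaceProd _ _ (zariskiMatrix n R) (zariskiMatrix n R))

/-- Zariski-closed subset of `GL n R`. -/
def IsZClosedSet {n : ℕ} {R : Type} [CommRing R] (s : Set (GL (Fin n) R)) : Prop :=
  @IsClosed _ (zariskiGL n R) s

/-- Zariski closure of a subset of `GL n R`. -/
def zClosureSet {n : ℕ} {R : Type} [CommRing R] (s : Set (GL (Fin n) R)) :
    Set (GL (Fin n) R) :=
  @closure _ (zariskiGL n R) s

/-- Zariski-(pre)connectedness for a subset of `GL n R`. -/
def IsZConnectedSet {n : ℕ} {R : Type} [CommRing R] (s : Set (GL (Fin n) R)) : Prop :=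
  @IsPreconnected _ (zariskiGL n R) s

/-- A subgroup of `GL n R` is Zariski closed. -/
def IsClosedSub {n : ℕ} {R : Type} [CommRing R] (H : Subgroup (GL (Fin n) R)) : Prop :=
  IsZClosedSet (H : Set (GL (Fin n) R))

/-- A subgroup of `GL n R` is Zariski connected. -/
def IsConnectedSub {n : ℕ} {R : Type} [CommRing R] (H : Subgroup (GL (Fin n) R)) : Prop :=
  IsZConnectedSet (H : Set (GL (Fin n) R))

/-- Zariski closure of a subgroup: the smallest Zariski-closed subgroup containing it. -/
def zClosureSub {n : ℕ} {R : Type} [CommRing R] (H : Subgroup (GL (Fin n) R)) :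
    Subgroup (GL (Fin n) R) :=
  sInf {K : Subgroup (GL (Fin n) R) | IsClosedSub K ∧ H ≤ K}

/-- Entrywise map `GL n R →* GL n S` along a ring homomorphism (base change). -/
def mapGL {n : ℕ} {R S : Type} [CommRing R] [CommRing S] (f : R →+* S) :
    GL (Fin n) R →* GL (Fin n) S :=
  Units.map (RingHom.mapMatrix f).toMonoidHom

/-- A subgroup all of whose elements are unipotent matrices. -/
def IsUnipotentSub {n : ℕ} {R : Type} [CommRing R] (H : Subgroup (GL (Fin n) R)) : Prop :=
  ∀ g ∈ H, ((g : Matrix (Fin n) (Fin n) R) - 1) ^ n = 0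

/-- Reductivity: every Zariski-closed connected normal unipotent subgroup is trivial
(i.e. the unipotent radical is trivial). -/
def IsReductiveSub {n : ℕ} {F : Type} [Field F] (G : Subgroup (GL (Fin n) F)) : Prop :=
  ∀ U : Subgroup (GL (Fin n) F), U ≤ G → IsClosedSub U → IsConnectedSub U →
    (∀ g ∈ G, ∀ u ∈ U, g * u * g⁻¹ ∈ U) → IsUnipotentSub U → U = ⊥

/-- A subtorus of `GL n F`: Zariski closed, connected, and simultaneously diagonalizable
over some field extension. -/
def IsSubtorus {n : ℕ} {F : Type} [Field F] (T : Subgroup (GL (Fin n) F)) : Prop :=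
  IsClosedSub T ∧ IsConnectedSub T ∧
    ∃ (K : Type) (_ : Field K) (_ : Algebra F K) (u : GL (Fin n) K),
      ∀ t ∈ T,
        (((u * mapGL (algebraMap F K) t * u⁻¹ : GL (Fin n) K) :
          Matrix (Fin n) (Fin n) K)).IsDiag

/-- `T` is a maximal torus of `G`. -/
def IsMaximalTorusOf {n : ℕ} {F : Type} [Field F] (T G : Subgroup (GL (Fin n) F)) : Prop :=
  IsSubtorus T ∧ T ≤ G ∧
    ∀ T' : Subgroup (GL (Fin n) F), IsSubtorus T' → T' ≤ G → T ≤ T' → T' = T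

/-- The tautological representation of a subgroup of `GL n F` is irreducible. -/
def IrreducibleOn {n : ℕ} {F : Type} [Field F] (G : Subgroup (GL (Fin n) F)) : Prop :=
  ∀ W : Submodule F (Fin n → F),
    (∀ g ∈ G, ∀ w ∈ W, (g : Matrix (Fin n) (Fin n) F).mulVec w ∈ W) → W = ⊥ ∨ W = ⊤

/-- Absolute irreducibility: irreducible after any field extension. -/
def AbsolutelyIrreducibleOn {n : ℕ} {F : Type} [Field F]
    (G : Subgroup (GL (Fin n) F)) : Prop :=
  ∀ (K : Type) (_ : Field K) (_ : Algebra F K),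
    IrreducibleOn (Subgroup.map (mapGL (n := n) (algebraMap F K)) G)

/-- The central subgroup of scalar matrices `𝔾ₘ ⊆ GL n F`. -/
def scalarSub (n : ℕ) (F : Type) [Field F] : Subgroup (GL (Fin n) F) :=
  (Units.map (algebraMap F (Matrix (Fin n) (Fin n) F)).toMonoidHom).range

/-- The (algebraic) derived subgroup: the Zariski closure of the commutator subgroup. -/
def algDerivedSub {n : ℕ} {F : Type} [Field F] (G : Subgroup (GL (Fin n) F)) :
    Subgroup (GL (Fin n) F) :=
  zClosureSub ⁅G, G⁆

/-- The identity component of a subgroup: the largest connected subgroup contained in it. -/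
def idCompSub {n : ℕ} {F : Type} [Field F] (H : Subgroup (GL (Fin n) F)) :
    Subgroup (GL (Fin n) F) :=
  sSup {K : Subgroup (GL (Fin n) F) | K ≤ H ∧ IsConnectedSub K}


/-- The regular function `t ↦ p(t) / det(t)^k` on `GL n F`; every algebraic character of a
closed subgroup of `GL n F` is of this form. -/
def regFunGL {n : ℕ} {F : Type} [Field F] (p : MvPolynomial (Fin n × Fin n) F) (k : ℕ)
    (t : GL (Fin n) F) : F :=
  MvPolynomial.eval (fun q : Fin n × Fin n => (t : Matrix (Fin n) (Fin n) F) q.1 q.2) p /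
    ((t : Matrix (Fin n) (Fin n) F).det) ^ k

/-- A subgroup of `GL n F` is anisotropic: it admits no nontrivial algebraic
(regular, nowhere-vanishing, multiplicative) character. -/
def IsAnisoSub {n : ℕ} {F : Type} [Field F] (H : Subgroup (GL (Fin n) F)) : Prop :=
  ∀ (p : MvPolynomial (Fin n × Fin n) F) (k : ℕ),
    (∀ t ∈ H, regFunGL p k t ≠ 0) →
    (∀ s ∈ H, ∀ t ∈ H, regFunGL p k (s * t) = regFunGL p k s * regFunGL p k t) →
    ∀ t ∈ H, regFunGL p k t = 1

section Polynomials

theorem MvPolynomial.eval_map_linearMap {σ K L : Type} [Field K] [CommRing L] [Algebra K L]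
    (ℓ : L →ₗ[K] K) (x : σ → K) (P : MvPolynomial σ L) :
    MvPolynomial.eval x (AddMonoidAlgebra.map ℓ.toAddMonoidHom P) =
      ℓ (MvPolynomial.eval (fun s => algebraMap K L (x s)) P) := by
  induction P using MvPolynomial.induction_on' with
  | monomial m c =>
    rw [← MvPolynomial.single_eq_monomial, AddMonoidAlgebra.map_single,
      MvPolynomial.single_eq_monomial, MvPolynomial.single_eq_monomial,
      MvPolynomial.eval_monomial, MvPolynomial.eval_monomial]
    simp only [← map_pow, ← map_finsuppProd, mul_comm c, ← Algebra.smul_def, map_smul, smul_eq_mul]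
    exact mul_comm _ _
  | add P Q hP hQ =>
    rw [AddMonoidAlgebra.map_add, map_add, map_add, map_add, hP, hQ]

theorem MvPolynomial.exists_abs_eval_le {σ : Type*} [Fintype σ] (P : MvPolynomial σ ℝ) (C : ℝ) :
    ∃ D, ∀ x : σ → ℝ, (∀ q, |x q| ≤ C) → |MvPolynomial.eval x P| ≤ D := by
  obtain ⟨D, hD⟩ := (isCompact_univ_pi fun _ : σ => isCompact_Icc (a := -C) (b := C)
    ).exists_bound_of_continuousOn (MvPolynomial.continuous_eval P).continuousOn
  exact ⟨D, fun x hx => hD x fun q _ => abs_le.1 (hx q)⟩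

variable {n : ℕ} {R : Type} [CommRing R]

def detPoly (n : ℕ) (R : Type) [CommRing R] : MvPolynomial (Fin n × Fin n) R :=
  (mvPolynomialX (Fin n) (Fin n) R).det

theorem eval_detPoly (A : Matrix (Fin n) (Fin n) R) :
    MvPolynomial.eval (fun q => A q.1 q.2) (detPoly n R) = A.det := by
  rw [detPoly, RingHom.map_det, mvPolynomialX_mapMatrix_eval]

theorem eval_mul_mvPolynomialX_mul (A B x : Matrix (Fin n) (Fin n) R) (i j : Fin n) :
    MvPolynomial.eval (fun q : Fin n × Fin n => x q.1 q.2)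
      ((A.map MvPolynomial.C * mvPolynomialX (Fin n) (Fin n) R * B.map MvPolynomial.C :
        Matrix (Fin n) (Fin n) (MvPolynomial (Fin n × Fin n) R)) i j) = (A * x * B) i j := by
  have hX : (mvPolynomialX (Fin n) (Fin n) R).map
      (MvPolynomial.eval fun q : Fin n × Fin n => x q.1 q.2) = x :=
    mvPolynomialX_map_eval₂ _ x
  rw [RingHom.map_matrix_mul, Matrix.map_mul, Matrix.map_map, Matrix.map_map, hX]
  simp [Function.comp_def]

end Polynomials

section Diagonalization

variable {n : ℕ}

theorem Matrix.IsDiag.mul_apply {α : Type*} [NonUnitalNonAssocSemiring α]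
    {A : Matrix (Fin n) (Fin n) α} (hA : A.IsDiag) (B : Matrix (Fin n) (Fin n) α) (i j : Fin n) :
    (A * B) i j = A i i * B i j := by
  rw [← hA.diagonal_diag, diagonal_mul, diagonal_apply_eq]

theorem Matrix.aeval_mulVecLin {R : Type} [CommRing R] (A : Matrix (Fin n) (Fin n) R)
    (r : Polynomial R) :
    Polynomial.aeval (mulVecLin A) r = mulVecLin (Polynomial.aeval A r) :=
  Polynomial.aeval_algHom_apply (toLinAlgEquiv' : Matrix (Fin n) (Fin n) R ≃ₐ[R] _) A r

theorem Matrix.isSemisimple_mulVecLin_map {K L : Type} [Field K] [PerfectField K] [Field L]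
    (f : K →+* L) {A : Matrix (Fin n) (Fin n) K}
    (hA : Module.End.IsSemisimple (mulVecLin A)) :
    Module.End.IsSemisimple (mulVecLin (A.map f)) := by
  set q := minpoly K (mulVecLin A)
  have hq : Polynomial.aeval A q = 0 := by
    rw [show q = minpoly K A by rw [← minpoly_toLin', toLin'_apply']]
    exact minpoly.aeval K A
  have hsep : (q.map f).Separable :=
    (PerfectField.separable_iff_squarefree.2 hA.minpoly_squarefree).map
  refine Module.End.isSemisimple_of_squarefree_aeval_eq_zero hsep.squarefree ?_
  have hmap : (algebraMap L (Matrix (Fin n) (Fin n) L)).comp f =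
      f.mapMatrix.comp (algebraMap K (Matrix (Fin n) (Fin n) K)) := by
    ext c i j
    simp [algebraMap_eq_diagonal, diagonal_apply, apply_ite f]
  rw [aeval_mulVecLin, ← RingHom.mapMatrix_apply, ← Polynomial.map_aeval_eq_aeval_map hmap, hq,
    map_zero, mulVecLin_zero]

theorem Matrix.exists_conj_eq_diagonal {K : Type} [Field K] [IsAlgClosed K]
    {B : Matrix (Fin n) (Fin n) K} (hB : Module.End.IsSemisimple (mulVecLin B)) :
    ∃ (u : GL (Fin n) K) (d : Fin n → K),
      ((u⁻¹ : GL (Fin n) K) : Matrix (Fin n) (Fin n) K) * B * u = diagonal d := by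
  classical
  set f : Module.End K (Fin n → K) := mulVecLin B
  have hInt := DirectSum.isInternal_submodule_of_iSupIndep_of_iSup_eq_top
    (Module.End.eigenspaces_iSupIndep f) hB.iSup_eigenspace_eq_top
  let b := hInt.collectedBasis fun μ => Module.Basis.ofVectorSpace K (f.eigenspace μ)
  let e := b.indexEquiv (Pi.basisFun K (Fin n))
  let c := b.reindex e
  let d : Fin n → K := fun j => (e.symm j).1
  have hc : ∀ j, B *ᵥ c j = d j • c j := fun j => by
    have hmem : b (e.symm j) ∈ f.eigenspace (d j) := hInt.collectedBasis_mem _ (e.symm j)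
    rw [Module.End.mem_eigenspace_iff] at hmem
    rw [show c j = b (e.symm j) from b.reindex_apply e j]
    exact hmem
  let u : GL (Fin n) K := ⟨(Pi.basisFun K (Fin n)).toMatrix c, c.toMatrix (Pi.basisFun K (Fin n)),
    Module.Basis.toMatrix_mul_toMatrix_flip _ _, Module.Basis.toMatrix_mul_toMatrix_flip _ _⟩
  have hBu : B * (u : Matrix (Fin n) (Fin n) K) = u * diagonal d := by
    ext i j
    have hu : ∀ k, (u : Matrix (Fin n) (Fin n) K) k j = c j k := fun k => by
      simp [u, Module.Basis.toMatrix_apply]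
    calc (B * u) i j = (B *ᵥ c j) i := by simp only [mul_apply, mulVec, dotProduct, hu]
      _ = (u * diagonal d) i j := by
        rw [hc j, mul_diagonal, Pi.smul_apply, smul_eq_mul, hu, mul_comm]
  refine ⟨u, d, ?_⟩
  rw [Matrix.mul_assoc, hBu, ← Matrix.mul_assoc, ← Units.val_mul, inv_mul_cancel, Units.val_one,
    Matrix.one_mul]

theorem Matrix.isRoot_charpoly_of_conj_eq_diagonal {K : Type} [Field K]
    {B : Matrix (Fin n) (Fin n) K} {u : GL (Fin n) K} {d : Fin n → K}
    (h : ((u⁻¹ : GL (Fin n) K) : Matrix (Fin n) (Fin n) K) * B * u = diagonal d) (l : Fin n) :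
    B.charpoly.IsRoot (d l) := by
  rw [← charpoly_units_conj' u B, ← coe_units_inv, h, charpoly_diagonal, Polynomial.IsRoot,
    Polynomial.eval_prod]
  exact Finset.prod_eq_zero (Finset.mem_univ l) (by simp)

end Diagonalization

theorem exists_normSq_pow_mul_pow_eq_pow {α : ℂ} {t : ℝ} (ht : t ≠ 0) {a b : ℤ} (hb : b ≠ 0)
    (h : ‖α‖ ^ b = t ^ a) : ∃ p m s : ℕ, 0 < p ∧ Complex.normSq α ^ p * t ^ m = t ^ s := by
  obtain ⟨a, b, hb, h⟩ : ∃ a b : ℤ, 0 < b ∧ ‖α‖ ^ b = t ^ a := by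
    rcases hb.lt_or_gt with hb | hb
    · exact ⟨-a, -b, by omega, by rw [_root_.zpow_neg, _root_.zpow_neg, h]⟩
    · exact ⟨a, b, hb, h⟩
  have hsq : Complex.normSq α ^ b = t ^ (2 * a) := by
    rw [Complex.normSq_eq_norm_sq, ← zpow_natCast, ← _root_.zpow_mul, mul_comm, _root_.zpow_mul, h,
      ← _root_.zpow_mul, mul_comm]
    norm_num
  refine ⟨b.toNat, (-(2 * a)).toNat, (2 * a).toNat, by omega, ?_⟩
  rw [← zpow_natCast, ← zpow_natCast, ← zpow_natCast, Int.toNat_of_nonneg hb.le, hsq,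
    ← zpow_add₀ ht]
  congr 1
  omega

theorem MonoidHom.abs_eq_one_of_abs_le {G : Type*} [Group G] (f : G →* ℝ) {C : ℝ}
    (hC : ∀ x, |f x| ≤ C) (x : G) : |f x| = 1 := by
  have hle : ∀ y, |f y| ≤ 1 := fun y => by
    by_contra! hy
    obtain ⟨m, hm⟩ := pow_unbounded_of_one_lt C hy
    have := hC (y ^ m)
    rw [map_pow, abs_pow] at this
    linarith
  have hinv : |f x| * |f x⁻¹| = 1 := by
    rw [← abs_mul, ← map_mul, mul_inv_cancel, map_one, abs_one]
  nlinarith [abs_nonneg (f x), abs_nonneg (f x⁻¹), hle x, hle x⁻¹]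

theorem IsPreconnected.subset_left_of_isClosed {X : Type*} [TopologicalSpace X]
    {s u v : Set X} (hs : IsPreconnected s) (hu : IsClosed u) (hv : IsClosed v)
    (huv : Disjoint u v) (hsuv : s ⊆ u ∪ v) (hsu : (s ∩ u).Nonempty) : s ⊆ u := by
  refine (isPreconnected_iff_subset_of_disjoint_closed.1 hs u v hu hv hsuv
    (by rw [huv.inter_eq, Set.inter_empty])).resolve_right fun hsv => ?_
  obtain ⟨x, hxs, hxu⟩ := hsu
  exact huv.ne_of_mem hxu (hsv hxs) rfl

section ZariskiTopology

variable {n : ℕ}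

theorem isZClosedSet_setOf_eval_eq_zero {R : Type} [CommRing R]
    (P : MvPolynomial (Fin n × Fin n) R) :
    IsZClosedSet {g : GL (Fin n) R |
      MvPolynomial.eval (fun q => (g : Matrix (Fin n) (Fin n) R) q.1 q.2) P = 0} := by
  let _ := zariskiMatrix n R
  let _ := zariskiGL n R
  have hP : IsClosed
      {A : Matrix (Fin n) (Fin n) R | MvPolynomial.eval (fun q => A q.1 q.2) P = 0} := by
    rw [← isOpen_compl_iff]
    exact TopologicalSpace.isOpen_generateFrom_of_mem ⟨P, rfl⟩
  have hval : Continuous fun g : GL (Fin n) R => (g : Matrix (Fin n) (Fin n) R) :=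
    continuous_fst.comp (continuous_induced_dom (f := fun g : GL (Fin n) R =>
      ((g : Matrix (Fin n) (Fin n) R), ((g⁻¹ : GL (Fin n) R) : Matrix (Fin n) (Fin n) R))))
  exact hP.preimage hval

/-- Written in a `K`-basis of `L`, the value of `P` vanishes iff all its coordinates do, and each
coordinate is a polynomial over `K` in the entries. -/
theorem isOpen_setOf_eval_map_ne_zero {K L : Type} [Field K] [Field L] (f : K →+* L)
    (P : MvPolynomial (Fin n × Fin n) L) :
    @IsOpen _ (zariskiMatrix n K) {A | MvPolynomial.eval (fun q => f (A q.1 q.2)) P ≠ 0} := by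
  let _ := zariskiMatrix n K
  let _ : Algebra K L := f.toAlgebra
  let b := Module.Basis.ofVectorSpace K L
  have h : {A : Matrix (Fin n) (Fin n) K | MvPolynomial.eval (fun q => f (A q.1 q.2)) P ≠ 0} =
      ⋃ t, {A | MvPolynomial.eval (fun q => A q.1 q.2)
        (AddMonoidAlgebra.map (b.coord t).toAddMonoidHom P) ≠ 0} := by
    ext A
    rw [Set.mem_iUnion]
    change _ ≠ 0 ↔ ∃ t, _ ≠ 0
    simp only [MvPolynomial.eval_map_linearMap, ← not_forall, b.forall_coord_eq_zero_iff]
    rfl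
  rw [h]
  exact isOpen_iUnion fun t => TopologicalSpace.isOpen_generateFrom_of_mem ⟨_, rfl⟩

theorem continuous_mapMatrix_zariski {K L : Type} [Field K] [Field L] (f : K →+* L) :
    @Continuous _ _ (zariskiMatrix n K) (zariskiMatrix n L) f.mapMatrix := by
  let _ := zariskiMatrix n K
  refine continuous_generateFrom_iff.2 ?_
  rintro _ ⟨P, rfl⟩
  exact isOpen_setOf_eval_map_ne_zero f P

theorem continuous_mapGL_zariski {K L : Type} [Field K] [Field L] (f : K →+* L) :
    @Continuous _ _ (zariskiGL n K) (zariskiGL n L) (mapGL f) := by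
  let _ := zariskiMatrix n K
  let _ := zariskiMatrix n L
  let _ := zariskiGL n K
  have hf := continuous_mapMatrix_zariski (n := n) f
  refine continuous_induced_rng.2 (((hf.prodMap hf).comp continuous_induced_dom).congr fun g => ?_)
  simp only [Function.comp_apply, Prod.map_apply, ← map_inv]
  rfl

theorem le_zClosureSub {R : Type} [CommRing R] (H : Subgroup (GL (Fin n) R)) :
    H ≤ zClosureSub H :=
  le_sInf fun _ hK => hK.2

theorem isClosedSub_zClosureSub {R : Type} [CommRing R] (H : Subgroup (GL (Fin n) R)) :
    IsClosedSub (zClosureSub H) := by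
  rw [IsClosedSub, IsZClosedSet, zClosureSub, Subgroup.coe_sInf]
  exact @isClosed_biInter _ _ (zariskiGL n R) _ _ fun K hK => hK.1

theorem zClosureSub_le {R : Type} [CommRing R] {H K : Subgroup (GL (Fin n) R)}
    (hK : IsClosedSub K) (h : H ≤ K) : zClosureSub H ≤ K :=
  sInf_le ⟨hK, h⟩

theorem idCompSub_le {F : Type} [Field F] (H : Subgroup (GL (Fin n) F)) : idCompSub H ≤ H :=
  sSup_le fun _ hK => hK.1

theorem IsClosedSub.comap {K L : Type} [Field K] [Field L] (f : K →+* L)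
    {H : Subgroup (GL (Fin n) L)} (hH : IsClosedSub H) : IsClosedSub (H.comap (mapGL f)) :=
  @IsClosed.preimage _ _ (zariskiGL n K) (zariskiGL n L) _ (continuous_mapGL_zariski f) _ hH

theorem IsConnectedSub.map {K L : Type} [Field K] [Field L] (f : K →+* L)
    {H : Subgroup (GL (Fin n) K)} (hH : IsConnectedSub H) : IsConnectedSub (H.map (mapGL f)) := by
  let _ := zariskiGL n K
  let _ := zariskiGL n L
  rw [IsConnectedSub, IsZConnectedSet, Subgroup.coe_map]
  exact hH.image _ (continuous_mapGL_zariski f).continuousOn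

theorem det_mapGL {K L : Type} [CommRing K] [CommRing L] (f : K →+* L) (g : GL (Fin n) K) :
    ((mapGL f g : GL (Fin n) L) : Matrix (Fin n) (Fin n) L).det =
      f (g : Matrix (Fin n) (Fin n) K).det :=
  (RingHom.map_det f _).symm

end ZariskiTopology

section Characters

variable {n : ℕ} {F : Type} [Field F]

theorem isZClosedSet_setOf_regFunGL_eq (p : MvPolynomial (Fin n × Fin n) F) (k : ℕ) (c : F) :
    IsZClosedSet {g : GL (Fin n) F | regFunGL p k g = c} := by
  convert isZClosedSet_setOf_eval_eq_zero (p - MvPolynomial.C c * detPoly n F ^ k) using 1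
  ext g
  change regFunGL p k g = c ↔ MvPolynomial.eval _ _ = 0
  rw [regFunGL, div_eq_iff (pow_ne_zero _ (GeneralLinearGroup.det_ne_zero g)), map_sub, map_mul,
    map_pow, MvPolynomial.eval_C, eval_detPoly, sub_eq_zero]

def regFunChar (H : Subgroup (GL (Fin n) F)) (p : MvPolynomial (Fin n × Fin n) F) (k : ℕ)
    (hne : ∀ t ∈ H, regFunGL p k t ≠ 0)
    (hmul : ∀ s ∈ H, ∀ t ∈ H, regFunGL p k (s * t) = regFunGL p k s * regFunGL p k t) :
    H →* F where
  toFun t := regFunGL p k t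
  map_one' := by
    have h := hmul 1 H.one_mem 1 H.one_mem
    rw [mul_one] at h
    exact (mul_eq_left₀ (hne 1 H.one_mem)).1 h.symm
  map_mul' s t := hmul s s.2 t t.2

variable {H : Subgroup (GL (Fin n) F)} {p : MvPolynomial (Fin n × Fin n) F} {k : ℕ}
  {hne : ∀ t ∈ H, regFunGL p k t ≠ 0}
  {hmul : ∀ s ∈ H, ∀ t ∈ H, regFunGL p k (s * t) = regFunGL p k s * regFunGL p k t}

theorem mem_map_ker_regFunChar {t : GL (Fin n) F} :
    t ∈ (regFunChar H p k hne hmul).ker.map H.subtype ↔ t ∈ H ∧ regFunGL p k t = 1 :=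
  ⟨fun ⟨s, hs, hst⟩ => hst ▸ ⟨s.2, hs⟩, fun ⟨ht, h1⟩ => ⟨⟨t, ht⟩, h1, rfl⟩⟩

theorem isClosedSub_map_ker_regFunChar (hH : IsClosedSub H) :
    IsClosedSub ((regFunChar H p k hne hmul).ker.map H.subtype) := by
  have h : ((regFunChar H p k hne hmul).ker.map H.subtype : Set (GL (Fin n) F)) =
      (H : Set (GL (Fin n) F)) ∩ {g | regFunGL p k g = 1} :=
    Set.ext fun _ => mem_map_ker_regFunChar
  let _ := zariskiGL n F
  rw [IsClosedSub, IsZClosedSet, h]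
  exact hH.inter (isZClosedSet_setOf_regFunGL_eq p k 1)

theorem isAnisoSub_of_le_map_ker
    (h : ∀ p k hne hmul, H ≤ (regFunChar H p k hne hmul).ker.map H.subtype) : IsAnisoSub H :=
  fun p k hne hmul _ ht => (mem_map_ker_regFunChar.1 (h p k hne hmul ht)).2

theorem IsAnisoSub.le_map_ker {K : Subgroup (GL (Fin n) F)} (hK : IsAnisoSub K) (hKH : K ≤ H) :
    K ≤ (regFunChar H p k hne hmul).ker.map H.subtype := fun t ht =>
  mem_map_ker_regFunChar.2 ⟨hKH ht, hK p k (fun s hs => hne s (hKH hs))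
    (fun s hs s' hs' => hmul s (hKH hs) s' (hKH hs')) t ht⟩

end Characters

section Anisotropy

variable {n : ℕ} {F : Type} [Field F]

theorem IsAnisoSub.zClosureSub {H : Subgroup (GL (Fin n) F)} (hH : IsAnisoSub H) :
    IsAnisoSub (zClosureSub H) :=
  isAnisoSub_of_le_map_ker fun _ _ _ _ =>
    zClosureSub_le (isClosedSub_map_ker_regFunChar (isClosedSub_zClosureSub H))
      (hH.le_map_ker (le_zClosureSub H))

theorem isAnisoSub_sSup {𝒦 : Set (Subgroup (GL (Fin n) F))} (h : ∀ K ∈ 𝒦, IsAnisoSub K) :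
    IsAnisoSub (sSup 𝒦) :=
  isAnisoSub_of_le_map_ker fun _ _ _ _ =>
    sSup_le fun K hK => (h K hK).le_map_ker (le_sSup hK)

theorem isAnisoSub_map_idCompSub {E : Type} [Field E] (f : E →+* F)
    {T : Subgroup (GL (Fin n) E)}
    (h : ∀ K ≤ T, IsConnectedSub K → IsAnisoSub (K.map (mapGL f))) :
    IsAnisoSub ((idCompSub T).map (mapGL f)) := by
  rw [idCompSub, (Subgroup.gc_map_comap _).l_sSup, ← sSup_image]
  exact isAnisoSub_sSup fun _ ⟨K, ⟨hKT, hK⟩, hKf⟩ => hKf ▸ h K hKT hK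

theorem isAnisoSub_of_isConnectedSub_of_abs_le {Γ : Subgroup (GL (Fin n) ℝ)}
    (hΓ : IsConnectedSub Γ) {C : ℝ}
    (hC : ∀ g ∈ Γ, ∀ i j, |(g : Matrix (Fin n) (Fin n) ℝ) i j| ≤ C) : IsAnisoSub Γ := by
  refine isAnisoSub_of_le_map_ker fun p k hne hmul => ?_
  set χ := regFunChar Γ p k hne hmul
  obtain ⟨Dp, hDp⟩ := p.exists_abs_eval_le C
  obtain ⟨Dd, hDd⟩ := (detPoly n ℝ).exists_abs_eval_le C
  have hdet : ∀ g : Γ, |((g : GL (Fin n) ℝ) : Matrix (Fin n) (Fin n) ℝ).det| = 1 :=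
    ((Units.coeHom ℝ).comp (GeneralLinearGroup.det.comp Γ.subtype)).abs_eq_one_of_abs_le
      fun g => by simpa [eval_detPoly] using hDd _ fun q => hC g g.2 q.1 q.2
  have hχ : ∀ g : Γ, χ g = 1 ∨ χ g = -1 := fun g => (abs_eq zero_le_one).1 <|
    χ.abs_eq_one_of_abs_le (fun g => by
      change |regFunGL p k g| ≤ Dp
      rw [regFunGL, abs_div, abs_pow, hdet, one_pow, div_one]
      exact hDp _ fun q => hC g g.2 q.1 q.2) g
  have hsub : (Γ : Set (GL (Fin n) ℝ)) ⊆ {g | regFunGL p k g = 1} :=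
    @IsPreconnected.subset_left_of_isClosed _ (zariskiGL n ℝ) _ _ _ hΓ
      (isZClosedSet_setOf_regFunGL_eq p k 1) (isZClosedSet_setOf_regFunGL_eq p k (-1))
      (Set.disjoint_left.2 fun g (h1 : regFunGL p k g = 1) (h2 : regFunGL p k g = -1) => by
        linarith)
      (fun g hg => hχ ⟨g, hg⟩) ⟨1, Γ.one_mem, χ.map_one⟩
  exact fun g hg => mem_map_ker_regFunChar.2 ⟨hg, hsub hg⟩

end Anisotropy

section EigenvalueRelations

variable {n : ℕ}

def conjComplexify (u : GL (Fin n) ℂ) : GL (Fin n) ℝ →* GL (Fin n) ℂ :=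
  (MulAut.conj u⁻¹).toMonoidHom.comp (mapGL Complex.ofRealHom)

theorem coe_conjComplexify (u : GL (Fin n) ℂ) (g : GL (Fin n) ℝ) :
    (conjComplexify u g : Matrix (Fin n) (Fin n) ℂ) =
      ((u⁻¹ : GL (Fin n) ℂ) : Matrix (Fin n) (Fin n) ℂ) *
        (g : Matrix (Fin n) (Fin n) ℝ).map Complex.ofRealHom * u := by
  simp [conjComplexify, mapGL]

theorem starRingEnd_mul_map_ofReal_mul_apply (A B : Matrix (Fin n) (Fin n) ℂ)
    (g : Matrix (Fin n) (Fin n) ℝ) (i j : Fin n) :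
    starRingEnd ℂ ((A * g.map Complex.ofRealHom * B) i j) =
      (A.map (starRingEnd ℂ) * g.map Complex.ofRealHom * B.map (starRingEnd ℂ)) i j := by
  have hg : (g.map Complex.ofRealHom).map (starRingEnd ℂ) = g.map Complex.ofRealHom := by
    ext
    simp
  rw [RingHom.map_matrix_mul, Matrix.map_mul, hg]

/-- The eigenvalue `λₗ` is the `(l, l)` entry of `conjComplexify u g`; `normSq λₗ = |λₗ|²` keeps
the relations polynomial in the entries of `g`. -/
def eigenRelSub (u : GL (Fin n) ℂ) (p m s : Fin n → ℕ) : Subgroup (GL (Fin n) ℝ) where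
  carrier := {g | (conjComplexify u g : Matrix (Fin n) (Fin n) ℂ).IsDiag ∧
    ∀ l, Complex.normSq ((conjComplexify u g : Matrix (Fin n) (Fin n) ℂ) l l) ^ p l *
      (g : Matrix (Fin n) (Fin n) ℝ).det ^ m l = (g : Matrix (Fin n) (Fin n) ℝ).det ^ s l}
  one_mem' := by simp [isDiag_one]
  mul_mem' := by
    rintro g h ⟨hgd, hg⟩ ⟨hhd, hh⟩
    have hgh : (conjComplexify u (g * h) : Matrix (Fin n) (Fin n) ℂ) =
        conjComplexify u g * conjComplexify u h := by rw [map_mul, Units.val_mul]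
    refine ⟨fun i j hij => ?_, fun l => ?_⟩
    · show (conjComplexify u (g * h) : Matrix (Fin n) (Fin n) ℂ) i j = 0
      rw [hgh, hgd.mul_apply, hhd hij, mul_zero]
    · rw [hgh, hgd.mul_apply, Units.val_mul, det_mul, map_mul, mul_pow, mul_pow, mul_pow,
        mul_mul_mul_comm, hg l, hh l]
  inv_mem' := by
    rintro g ⟨hgd, hg⟩
    set A := (conjComplexify u g : Matrix (Fin n) (Fin n) ℂ)
    have hAB : ∀ i j, A i i * (conjComplexify u g⁻¹ : Matrix (Fin n) (Fin n) ℂ) i j =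
        (1 : Matrix (Fin n) (Fin n) ℂ) i j := fun i j => by
      rw [← hgd.mul_apply, map_inv, ← Units.val_mul, mul_inv_cancel, Units.val_one]
    have hA : ∀ i, A i i ≠ 0 := fun i h => by simpa [h] using hAB i i
    have hinv : ∀ i, (conjComplexify u g⁻¹ : Matrix (Fin n) (Fin n) ℂ) i i = (A i i)⁻¹ :=
      fun i => eq_inv_of_mul_eq_one_right (by simpa using hAB i i)
    refine ⟨fun i j hij => ?_, fun l => ?_⟩
    · simpa [one_apply_ne hij, hA i] using hAB i j
    · show Complex.normSq ((conjComplexify u g⁻¹ : Matrix (Fin n) (Fin n) ℂ) l l) ^ p l * _ = _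
      rw [hinv l, map_inv₀, inv_pow, coe_units_inv, det_nonsing_inv, Ring.inverse_eq_inv',
        inv_pow, inv_pow, ← mul_inv, hg l]

theorem isClosedSub_eigenRelSub (u : GL (Fin n) ℂ) (p m s : Fin n → ℕ) :
    IsClosedSub (eigenRelSub u p m s) := by
  let _ := zariskiGL n ℂ
  let _ := zariskiGL n ℝ
  let Y : Matrix (Fin n) (Fin n) ℂ → Matrix (Fin n) (Fin n) ℂ →
      Matrix (Fin n) (Fin n) (MvPolynomial (Fin n × Fin n) ℂ) := fun A B =>
    A.map MvPolynomial.C * mvPolynomialX (Fin n) (Fin n) ℂ * B.map MvPolynomial.C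
  let A : Matrix (Fin n) (Fin n) ℂ := ((u⁻¹ : GL (Fin n) ℂ) : Matrix (Fin n) (Fin n) ℂ)
  let B : Matrix (Fin n) (Fin n) ℂ := u
  let ev : GL (Fin n) ℂ → MvPolynomial (Fin n × Fin n) ℂ → ℂ := fun g =>
    MvPolynomial.eval fun q => (g : Matrix (Fin n) (Fin n) ℂ) q.1 q.2
  -- for real `g`, the conjugate of `(A g B) l l` is `(Ā g B̄) l l`
  let Z : Set (GL (Fin n) ℂ) := (⋂ i, ⋂ j, ⋂ (_ : i ≠ j), {g | ev g (Y A B i j) = 0}) ∩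
    ⋂ l, {g | ev g ((Y A B l l * Y (A.map (starRingEnd ℂ)) (B.map (starRingEnd ℂ)) l l) ^ p l *
      detPoly n ℂ ^ m l - detPoly n ℂ ^ s l) = 0}
  have hZ : IsClosed Z :=
    (isClosed_iInter fun i => isClosed_iInter fun j => isClosed_iInter fun _ =>
      isZClosedSet_setOf_eval_eq_zero _).inter
    (isClosed_iInter fun l => isZClosedSet_setOf_eval_eq_zero _)
  have hB : (eigenRelSub u p m s : Set (GL (Fin n) ℝ)) = mapGL Complex.ofRealHom ⁻¹' Z := by
    ext g
    have hx : (mapGL Complex.ofRealHom g : Matrix (Fin n) (Fin n) ℂ) =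
        (g : Matrix (Fin n) (Fin n) ℝ).map Complex.ofRealHom := rfl
    have hconj : A * (g : Matrix (Fin n) (Fin n) ℝ).map Complex.ofRealHom * B =
        conjComplexify u g := (coe_conjComplexify u g).symm
    have hdet : ((g : Matrix (Fin n) (Fin n) ℝ).map Complex.ofRealHom).det =
        ((g : Matrix (Fin n) (Fin n) ℝ).det : ℂ) := (RingHom.map_det _ _).symm
    simp only [Z, ev, Y, Set.mem_preimage, Set.mem_inter_iff, Set.mem_iInter, Set.mem_ofPred_eq,
      map_sub, map_mul, map_pow, eval_mul_mvPolynomialX_mul, eval_detPoly, hx,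
      ← starRingEnd_mul_map_ofReal_mul_apply, Complex.mul_conj]
    rw [hconj, hdet]
    simp only [← Complex.ofReal_pow, ← Complex.ofReal_mul, ← Complex.ofReal_sub,
      Complex.ofReal_eq_zero, sub_eq_zero]
    rfl
  rw [IsClosedSub, IsZClosedSet, hB]
  exact hZ.preimage (continuous_mapGL_zariski _)

theorem exists_abs_le_of_mem_eigenRelSub (u : GL (Fin n) ℂ) {p : Fin n → ℕ} (hp : ∀ l, 0 < p l)
    (m s : Fin n → ℕ) : ∃ C, ∀ g ∈ eigenRelSub u p m s, (g : Matrix (Fin n) (Fin n) ℝ).det = 1 →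
      ∀ i j, |(g : Matrix (Fin n) (Fin n) ℝ) i j| ≤ C := by
  obtain ⟨C, hC⟩ := Finite.exists_le fun q : Fin n × Fin n => ∑ l,
    ‖(u : Matrix (Fin n) (Fin n) ℂ) q.1 l‖ *
      ‖((u⁻¹ : GL (Fin n) ℂ) : Matrix (Fin n) (Fin n) ℂ) l q.2‖
  refine ⟨C, fun g ⟨hdiag, hrel⟩ hdet i j => ?_⟩
  set D := (conjComplexify u g : Matrix (Fin n) (Fin n) ℂ)
  have hnorm : ∀ l, ‖D l l‖ = 1 := fun l => by
    have h := hrel l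
    rwa [hdet, one_pow, one_pow, mul_one, pow_eq_one_iff_of_nonneg (Complex.normSq_nonneg _)
      (hp l).ne', Complex.normSq_eq_norm_sq, pow_eq_one_iff_of_nonneg (norm_nonneg _)
      two_ne_zero] at h
  have hg : (g : Matrix (Fin n) (Fin n) ℝ).map Complex.ofRealHom =
      u * D * ((u⁻¹ : GL (Fin n) ℂ) : Matrix (Fin n) (Fin n) ℂ) := by
    simp only [D, coe_conjComplexify, ← Matrix.mul_assoc, ← Units.val_mul, mul_inv_cancel,
      Units.val_one, Matrix.one_mul]
    rw [Matrix.mul_assoc, ← Units.val_mul, mul_inv_cancel, Units.val_one, Matrix.mul_one]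
  calc |(g : Matrix (Fin n) (Fin n) ℝ) i j|
      = ‖(u * D * ((u⁻¹ : GL (Fin n) ℂ) : Matrix (Fin n) (Fin n) ℂ)) i j‖ := by
        rw [← hg, map_apply, Complex.ofRealHom_eq_coe, Complex.norm_real, Real.norm_eq_abs]
    _ ≤ ∑ l, ‖(u : Matrix (Fin n) (Fin n) ℂ) i l‖ *
          ‖((u⁻¹ : GL (Fin n) ℂ) : Matrix (Fin n) (Fin n) ℂ) l j‖ := by
        rw [← hdiag.diagonal_diag, mul_apply]
        refine (norm_sum_le _ _).trans (Finset.sum_le_sum fun l _ => ?_)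
        rw [mul_diagonal, norm_mul, norm_mul, diag_apply, hnorm, mul_one]
    _ ≤ C := hC (i, j)

theorem mapGL_mem_eigenRelSub {E : Type} [Field E] (v : E →+* ℝ) {M : GL (Fin n) E}
    {u : GL (Fin n) ℂ} {d : Fin n → ℂ}
    (hu : ((u⁻¹ : GL (Fin n) ℂ) : Matrix (Fin n) (Fin n) ℂ) *
      (M : Matrix (Fin n) (Fin n) E).map (Complex.ofRealHom.comp v) * u = diagonal d)
    {p m s : Fin n → ℕ} (hrel : ∀ l, Complex.normSq (d l) ^ p l *
      v (M : Matrix (Fin n) (Fin n) E).det ^ m l = v (M : Matrix (Fin n) (Fin n) E).det ^ s l) :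
    mapGL v M ∈ eigenRelSub u p m s := by
  have hM : (conjComplexify u (mapGL v M) : Matrix (Fin n) (Fin n) ℂ) = diagonal d := by
    rw [coe_conjComplexify, ← hu]
    rfl
  refine ⟨hM ▸ isDiag_diagonal d, fun l => ?_⟩
  rw [hM, diagonal_apply_eq, det_mapGL]
  exact hrel l

end EigenvalueRelations

theorem stmt8_general {n : ℕ} {E : Type} [Field E]
    (M : GL (Fin n) E)
    (hss : Module.End.IsSemisimple
      (Matrix.mulVecLin ((M : Matrix (Fin n) (Fin n) E))))
    (hR : ∀ (v : E →+* ℝ) (i : E →+* ℂ), (∀ x : E, i x = (v x : ℂ)) →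
      ∀ α : ℂ,
        (Polynomial.map i (Matrix.charpoly (M : Matrix (Fin n) (Fin n) E))).IsRoot α →
        ∃ a b : ℤ, b ≠ 0 ∧
          ‖α‖ ^ b = (v ((M : Matrix (Fin n) (Fin n) E).det)) ^ a) :
    ∀ v : E →+* ℝ,
      IsAnisoSub (zClosureSub (Subgroup.map (mapGL v)
        (idCompSub
          (idCompSub (zClosureSub (Subgroup.zpowers M)) ⊓
            (Matrix.GeneralLinearGroup.det : GL (Fin n) E →* Eˣ).ker)))) := by
  intro v
  have := v.charZero
  obtain ⟨u, d, hu⟩ :=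
    exists_conj_eq_diagonal (isSemisimple_mulVecLin_map (Complex.ofRealHom.comp v) hss)
  have hrel (l : Fin n) : ∃ p m s : ℕ, 0 < p ∧ Complex.normSq (d l) ^ p *
      v (M : Matrix (Fin n) (Fin n) E).det ^ m = v (M : Matrix (Fin n) (Fin n) E).det ^ s := by
    have hroot := isRoot_charpoly_of_conj_eq_diagonal hu l
    rw [charpoly_map] at hroot
    obtain ⟨a, b, hb, h⟩ := hR v _ (fun _ => rfl) (d l) hroot
    exact exists_normSq_pow_mul_pow_eq_pow ((map_ne_zero v).2 M.det_ne_zero) hb h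
  choose p m s hp hrel using hrel
  have hS : zClosureSub (Subgroup.zpowers M) ≤ (eigenRelSub u p m s).comap (mapGL v) :=
    zClosureSub_le ((isClosedSub_eigenRelSub u p m s).comap v)
      (Subgroup.zpowers_le.2 (mapGL_mem_eigenRelSub v hu hrel))
  obtain ⟨C, hC⟩ := exists_abs_le_of_mem_eigenRelSub u hp m s
  refine IsAnisoSub.zClosureSub (isAnisoSub_map_idCompSub v fun K hKT hK => ?_)
  refine isAnisoSub_of_isConnectedSub_of_abs_le (hK.map v) (C := C) ?_
  rintro _ ⟨g, hg, rfl⟩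
  obtain ⟨hgS, hg1⟩ := Subgroup.mem_inf.1 (hKT hg)
  refine hC _ (hS (idCompSub_le _ hgS)) ?_
  rw [det_mapGL, ← GeneralLinearGroup.val_det_apply, MonoidHom.mem_ker.1 hg1, Units.val_one,
    map_one]

/-- Let `M ∈ GL n E` be a semisimple matrix over a number field `E` with
characteristic polynomial `P`, let `S` be the Zariski closure of `⟨M⟩` and `T = S°`.
Suppose for each real embedding `v : E → ℝ`, some nonzero integral power of `|i(α)|`
equals some integral power of `det M` for every root `α` of `P` and every complex
embedding `i` extending `v`.  Then the torus `(T ∩ SL n)°` is anisotropic at every real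
place of `E`. -/
theorem stmt8 {n : ℕ} {E : Type} [Field E] [NumberField E]
    (M : GL (Fin n) E)
    (hss : Module.End.IsSemisimple
      (Matrix.mulVecLin ((M : Matrix (Fin n) (Fin n) E))))
    (hR : ∀ (v : E →+* ℝ) (i : E →+* ℂ), (∀ x : E, i x = (v x : ℂ)) →
      ∀ α : ℂ,
        (Polynomial.map i (Matrix.charpoly (M : Matrix (Fin n) (Fin n) E))).IsRoot α →
        ∃ a b : ℤ, b ≠ 0 ∧
          ‖α‖ ^ b = (v ((M : Matrix (Fin n) (Fin n) E).det)) ^ a) :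
    ∀ v : E →+* ℝ,
      IsAnisoSub (zClosureSub (Subgroup.map (mapGL v)
        (idCompSub
          (idCompSub (zClosureSub (Subgroup.zpowers M)) ⊓
            (Matrix.GeneralLinearGroup.det : GL (Fin n) E →* Eˣ).ker)))) :=
  stmt8_general M hss hR

end
end

section
/- Let G₁ ⊆ GL_{n,C} be a connected semisimple subgroup acting irreducibly on C^n, with maximal torus T and root set R in the character lattice X of T. Suppose for every g in the normalizer N_{GL_n(C)}(T), the conjugate group gG₁g^{-1} together with its root set g·R (relative to the same torus T and same formal character T ⊆ GL_n) avoids the four exceptional coincidences of Larsen–Pink (spin/tensor-of-spins for type B; highest weight (k,k−1,...,1,0,...,0) for C_r vs D_r; the 27-dimensional representations of A_2 vs G_2; the 4096-dimensional representations of C_4, D_4, F_4). Then g·R = R for all g ∈ N_{GL_n(C)}(T), i.e., the invariance of roots condition holds. -/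
open Matrix
open scoped MatrixGroups

noncomputable section

/-- The vanishing ideal of a subset of `GL n F`. -/
def vanishingIdealGL {n : ℕ} {F : Type} [Field F] (s : Set (GL (Fin n) F)) :
    Ideal (MvPolynomial (Fin n × Fin n) F) :=
  ⨅ (g : GL (Fin n) F) (_ : g ∈ s),
    RingHom.ker (MvPolynomial.eval
      (fun q : Fin n × Fin n => (g : Matrix (Fin n) (Fin n) F) q.1 q.2))

/-- The Lie algebra of a Zariski-closed subgroup of `GL n F` (via dual numbers). -/
def lieAlgOf {n : ℕ} {F : Type} [Field F] (G : Subgroup (GL (Fin n) F)) :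
    Set (Matrix (Fin n) (Fin n) F) :=
  {A | ∀ p ∈ vanishingIdealGL (G : Set (GL (Fin n) F)),
    MvPolynomial.eval
      (fun q : Fin n × Fin n =>
        algebraMap F (DualNumber F) ((1 : Matrix (Fin n) (Fin n) F) q.1 q.2) +
          DualNumber.eps * algebraMap F (DualNumber F) (A q.1 q.2))
      (MvPolynomial.map (algebraMap F (DualNumber F)) p) = 0}

/-- The character of a diagonal torus with exponent vector `m`. -/
def chiVec {n : ℕ} {F : Type} [Field F] (m : Fin n → ℤ) (t : GL (Fin n) F) : F :=
  ∏ i, ((t : Matrix (Fin n) (Fin n) F) i i) ^ (m i)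

/-- `m` is a root of `(G, T)` for a diagonal torus `T`. -/
def IsRootVec {n : ℕ} {F : Type} [Field F] (G T : Subgroup (GL (Fin n) F))
    (m : Fin n → ℤ) : Prop :=
  (∃ t ∈ T, chiVec m t ≠ 1) ∧
  ∃ A ∈ lieAlgOf G, A ≠ 0 ∧ ∀ t ∈ T,
    (t : Matrix (Fin n) (Fin n) F) * A =
      chiVec m t • (A * (t : Matrix (Fin n) (Fin n) F))

/-- Semisimplicity: reductive with finite center. -/
def IsSemisimpleSub {n : ℕ} {F : Type} [Field F] (G : Subgroup (GL (Fin n) F)) : Prop :=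
  IsReductiveSub G ∧ Set.Finite {g : GL (Fin n) F | g ∈ G ∧ ∀ h ∈ G, Commute g h}

/-!
Conjugation by `g ∈ N(T)` is a Zariski homeomorphism of `GL n` fixing `T`, so it carries `G₁` to a
group `G' = g G₁ g⁻¹` that is again closed, connected, semisimple and irreducible, with maximal
torus `T`, and it carries a root space `A` of `G₁` of weight `m` to the root space `g A g⁻¹` of `G'`
of weight `g · m`. Thus `G₁` and `G'` have the same formal character, Larsen–Pink applies, and the
root `g · m` of `G'` is a root of `G₁`.
-/

open MvPolynomial Topology

section ZariskiTopology

variable {n : ℕ} {R S : Type} [CommRing R] [CommRing S]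

def mulMulSubst (P Q : Matrix (Fin n) (Fin n) R) :
    MvPolynomial (Fin n × Fin n) R →ₐ[R] MvPolynomial (Fin n × Fin n) R :=
  bind₁ fun q => (P.map C * mvPolynomialX (Fin n) (Fin n) R * Q.map C :
    Matrix (Fin n) (Fin n) (MvPolynomial (Fin n × Fin n) R)) q.1 q.2

theorem eval₂_mulMulSubst (f : R →+* S) (P Q : Matrix (Fin n) (Fin n) R)
    (A : Matrix (Fin n) (Fin n) S) (p : MvPolynomial (Fin n × Fin n) R) :
    eval₂ f (fun q => A q.1 q.2) (mulMulSubst P Q p) =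
      eval₂ f (fun q => (P.map f * A * Q.map f) q.1 q.2) p := by
  have hsubst : (P.map C * mvPolynomialX (Fin n) (Fin n) R * Q.map C :
      Matrix (Fin n) (Fin n) (MvPolynomial (Fin n × Fin n) R)).map
      (eval₂Hom f fun q => A q.1 q.2) = P.map f * A * Q.map f := by
    rw [Matrix.map_mul, Matrix.map_mul, Matrix.map_map, Matrix.map_map]
    simp [Function.comp_def, mvPolynomialX_map_eval₂]
  rw [← coe_eval₂Hom, mulMulSubst, eval₂Hom_bind₁, ← hsubst]
  rfl

theorem eval_mulMulSubst (P Q A : Matrix (Fin n) (Fin n) R)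
    (p : MvPolynomial (Fin n × Fin n) R) :
    eval (fun q => A q.1 q.2) (mulMulSubst P Q p) = eval (fun q => (P * A * Q) q.1 q.2) p := by
  simpa using eval₂_mulMulSubst (RingHom.id R) P Q A p

theorem continuous_zariskiMatrix_mul_mul (P Q : Matrix (Fin n) (Fin n) R) :
    Continuous[zariskiMatrix n R, zariskiMatrix n R] fun A => P * A * Q := by
  unfold zariskiMatrix
  rw [continuous_generateFrom_iff]
  rintro _ ⟨p, rfl⟩
  refine TopologicalSpace.isOpen_generateFrom_of_mem ⟨mulMulSubst P Q p, ?_⟩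
  ext A
  simp [eval_mulMulSubst]

theorem continuous_zariskiGL_mul_mul (a b : GL (Fin n) R) :
    Continuous[zariskiGL n R, zariskiGL n R] fun h => a * h * b := by
  let := zariskiMatrix n R
  let := zariskiGL n R
  have hemb : Continuous fun h : GL (Fin n) R => ((h : Matrix (Fin n) (Fin n) R),
      ((h⁻¹ : GL (Fin n) R) : Matrix (Fin n) (Fin n) R)) := continuous_induced_dom
  refine continuous_induced_rng.2 ?_
  convert ((continuous_zariskiMatrix_mul_mul (a : Matrix (Fin n) (Fin n) R) b).prodMap
    (continuous_zariskiMatrix_mul_mul ((b⁻¹ : GL (Fin n) R) : Matrix (Fin n) (Fin n) R)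
      (a⁻¹ : GL (Fin n) R))).comp hemb using 1
  ext h : 1
  simp only [Function.comp_apply, Prod.map_apply, _root_.mul_inv_rev, Units.val_mul, mul_assoc]

end ZariskiTopology

section Conjugation

variable {G : Type*} [Group G]

theorem Subgroup.mem_map_conj {g x : G} {H : Subgroup G} :
    x ∈ H.map (MulAut.conj g).toMonoidHom ↔ g⁻¹ * x * g ∈ H := by
  simp only [Subgroup.mem_map_equiv, MulAut.conj_symm_apply]

theorem Subgroup.map_conj_map_conj_inv (g : G) (H : Subgroup G) :
    (H.map (MulAut.conj g⁻¹).toMonoidHom).map (MulAut.conj g).toMonoidHom = H := by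
  ext x
  simp only [Subgroup.mem_map_conj, inv_inv]
  group

theorem Subgroup.map_conj_inv_map_conj (g : G) (H : Subgroup G) :
    (H.map (MulAut.conj g).toMonoidHom).map (MulAut.conj g⁻¹).toMonoidHom = H := by
  simpa using map_conj_map_conj_inv g⁻¹ H

end Conjugation

section ConjugateSubgroup

open Subgroup

variable {n : ℕ} {R : Type} [CommRing R]

theorem IsClosedSub.map_conj {H : Subgroup (GL (Fin n) R)} (hH : IsClosedSub H)
    (g : GL (Fin n) R) : IsClosedSub (H.map (MulAut.conj g).toMonoidHom) := by
  have hpre : ((H.map (MulAut.conj g).toMonoidHom : Subgroup (GL (Fin n) R)) :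
      Set (GL (Fin n) R)) = (fun x => g⁻¹ * x * g) ⁻¹' H := Set.ext fun _ => mem_map_conj
  rw [IsClosedSub, IsZClosedSet, hpre]
  exact @IsClosed.preimage _ _ (zariskiGL n R) (zariskiGL n R) _
    (continuous_zariskiGL_mul_mul g⁻¹ g) _ hH

theorem IsConnectedSub.map_conj {H : Subgroup (GL (Fin n) R)} (hH : IsConnectedSub H)
    (g : GL (Fin n) R) : IsConnectedSub (H.map (MulAut.conj g).toMonoidHom) := by
  let := zariskiGL n R
  rw [IsConnectedSub, IsZConnectedSet, coe_map]
  exact hH.image _ (continuous_zariskiGL_mul_mul g g⁻¹).continuousOn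

theorem IsUnipotentSub.map_conj {U : Subgroup (GL (Fin n) R)} (hU : IsUnipotentSub U)
    (g : GL (Fin n) R) : IsUnipotentSub (U.map (MulAut.conj g).toMonoidHom) := by
  intro u hu
  have hconj : (u : Matrix (Fin n) (Fin n) R) - 1 =
      g * (((g⁻¹ * u * g : GL (Fin n) R) : Matrix (Fin n) (Fin n) R) - 1) * g⁻¹ := by
    conv_lhs => rw [show u = g * (g⁻¹ * u * g) * g⁻¹ by group]
    rw [Matrix.mul_sub, Matrix.sub_mul, Matrix.mul_one, Units.mul_inv, Units.val_mul,
      Units.val_mul]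
  rw [hconj, Units.conj_pow, hU _ (mem_map_conj.1 hu), mul_zero, zero_mul]

variable {F : Type} [Field F]

theorem IsReductiveSub.map_conj {G : Subgroup (GL (Fin n) F)} (hG : IsReductiveSub G)
    (g : GL (Fin n) F) : IsReductiveSub (G.map (MulAut.conj g).toMonoidHom) := by
  intro U hUG hUcl hUconn hUnormal hUunip
  suffices U.map (MulAut.conj g⁻¹).toMonoidHom = ⊥ by
    rw [← map_conj_map_conj_inv g U, this, Subgroup.map_bot]
  refine hG _ (fun x hx => ?_) (hUcl.map_conj _) (hUconn.map_conj _) (fun h hh u hu => ?_)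
    (hUunip.map_conj _)
  · rw [mem_map_conj, inv_inv] at hx
    simpa [mem_map_conj, mul_assoc] using hUG hx
  · rw [mem_map_conj, inv_inv] at hu ⊢
    rw [show g * (h * u * h⁻¹) * g⁻¹ =
      g * h * g⁻¹ * (g * u * g⁻¹) * (g * h * g⁻¹)⁻¹ by group]
    exact hUnormal _ (mem_map_conj.2 (by simpa [mul_assoc] using hh)) _ hu

theorem IsSemisimpleSub.map_conj {G : Subgroup (GL (Fin n) F)} (hG : IsSemisimpleSub G)
    (g : GL (Fin n) F) : IsSemisimpleSub (G.map (MulAut.conj g).toMonoidHom) := by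
  refine ⟨hG.1.map_conj g,
    (hG.2.preimage (MulAut.conj g⁻¹).injective.injOn).subset fun x ⟨hx, hcomm⟩ => ?_⟩
  refine ⟨by simpa using mem_map_conj.1 hx, fun h hh => ?_⟩
  have hgh : g * h * g⁻¹ ∈ G.map (MulAut.conj g).toMonoidHom :=
    mem_map_conj.2 (by simpa [mul_assoc] using hh)
  simpa [mul_assoc] using (hcomm _ hgh).map (MulAut.conj g⁻¹)

theorem IrreducibleOn.map_conj {G : Subgroup (GL (Fin n) F)} (hG : IrreducibleOn G)
    (g : GL (Fin n) F) : IrreducibleOn (G.map (MulAut.conj g).toMonoidHom) := by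
  intro W hW
  let W₀ := W.comap (Matrix.mulVecLin (g : Matrix (Fin n) (Fin n) F))
  have hW₀ : ∀ h ∈ G, ∀ w ∈ W₀, (h : Matrix (Fin n) (Fin n) F) *ᵥ w ∈ W₀ := by
    intro h hh w hw
    have := hW (g * h * g⁻¹) (mem_map_conj.2 (by simpa [mul_assoc] using hh)) _ hw
    simpa [W₀, Matrix.mulVec_mulVec, Matrix.mul_assoc] using this
  have hmem : ∀ v, ((g⁻¹ : GL (Fin n) F) : Matrix (Fin n) (Fin n) F) *ᵥ v ∈ W₀ ↔ v ∈ W := by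
    simp [W₀, Matrix.mulVec_mulVec]
  refine (hG W₀ hW₀).imp (fun hbot => ?_) (fun htop => ?_)
  · refine (Submodule.eq_bot_iff W).2 fun v hv => ?_
    have h0 := (hmem v).2 hv
    rw [hbot, Submodule.mem_bot] at h0
    simpa [Matrix.mulVec_mulVec] using congrArg ((g : Matrix (Fin n) (Fin n) F) *ᵥ ·) h0
  · exact eq_top_iff.2 fun v _ => (hmem v).1 (htop ▸ Submodule.mem_top)

theorem IsSubtorus.map_conj {T : Subgroup (GL (Fin n) F)} (hT : IsSubtorus T)
    (g : GL (Fin n) F) : IsSubtorus (T.map (MulAut.conj g).toMonoidHom) := by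
  obtain ⟨hcl, hconn, K, _, _, u, hu⟩ := hT
  refine ⟨hcl.map_conj g, hconn.map_conj g, K, inferInstance, inferInstance,
    u * (mapGL (algebraMap F K) g)⁻¹, fun t ht => ?_⟩
  have hconj : u * (mapGL (algebraMap F K) g)⁻¹ * mapGL (algebraMap F K) t *
      (u * (mapGL (algebraMap F K) g)⁻¹)⁻¹ =
        u * mapGL (algebraMap F K) (g⁻¹ * t * g) * u⁻¹ := by
    simp only [_root_.map_mul, _root_.map_inv]
    group
  rw [hconj]
  exact hu _ (mem_map_conj.1 ht)

theorem IsMaximalTorusOf.map_conj {T G : Subgroup (GL (Fin n) F)} (hT : IsMaximalTorusOf T G)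
    {g : GL (Fin n) F} (hg : g ∈ normalizer (T : Set (GL (Fin n) F))) :
    IsMaximalTorusOf T (G.map (MulAut.conj g).toMonoidHom) := by
  obtain ⟨htorus, hTG, hmax⟩ := hT
  have hTg : T.map (MulAut.conj g).toMonoidHom = T := mem_normalizer_iff_map_conj_eq.1 hg
  refine ⟨htorus, hTg ▸ map_mono hTG, fun T' hT' hT'G hTT' => ?_⟩
  have hT'g : T'.map (MulAut.conj g⁻¹).toMonoidHom = T := by
    refine hmax _ (hT'.map_conj g⁻¹) ?_ ?_
    · have := map_mono (f := (MulAut.conj g⁻¹).toMonoidHom) hT'G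
      rwa [map_conj_inv_map_conj] at this
    · have := map_mono (f := (MulAut.conj g⁻¹).toMonoidHom) hTT'
      rwa [← hTg, map_conj_inv_map_conj] at this
  rw [← map_conj_map_conj_inv g T', hT'g, hTg]

end ConjugateSubgroup

section LieAlgebra

open Subgroup

variable {n : ℕ} {F : Type} [Field F]

theorem mem_vanishingIdealGL {s : Set (GL (Fin n) F)} {p : MvPolynomial (Fin n × Fin n) F} :
    p ∈ vanishingIdealGL s ↔
      ∀ g ∈ s, eval (fun q => (g : Matrix (Fin n) (Fin n) F) q.1 q.2) p = 0 := by
  simp only [vanishingIdealGL, Ideal.mem_iInf, RingHom.mem_ker]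

theorem mulMulSubst_mem_vanishingIdealGL {G : Subgroup (GL (Fin n) F)} {g : GL (Fin n) F}
    {p : MvPolynomial (Fin n × Fin n) F}
    (hp : p ∈ vanishingIdealGL (G.map (MulAut.conj g).toMonoidHom : Set (GL (Fin n) F))) :
    mulMulSubst (g : Matrix (Fin n) (Fin n) F) (g⁻¹ : GL (Fin n) F) p ∈
      vanishingIdealGL (G : Set (GL (Fin n) F)) := by
  refine mem_vanishingIdealGL.2 fun h hh => ?_
  rw [eval_mulMulSubst, ← Units.val_mul, ← Units.val_mul]
  exact mem_vanishingIdealGL.1 hp _ (mem_map_conj.2 (by simpa [mul_assoc] using hh))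

theorem conj_mem_lieAlgOf_map_conj {G : Subgroup (GL (Fin n) F)} {A : Matrix (Fin n) (Fin n) F}
    (hA : A ∈ lieAlgOf G) (g : GL (Fin n) F) :
    (g : Matrix (Fin n) (Fin n) F) * A * (g⁻¹ : GL (Fin n) F) ∈
      lieAlgOf (G.map (MulAut.conj g).toMonoidHom) := by
  set f := algebraMap F (DualNumber F)
  set ε : DualNumber F := DualNumber.eps
  -- `lieAlgOf` tests membership at the dual-number point `1 + ε B`.
  have hpoint : ∀ B : Matrix (Fin n) (Fin n) F,
      (fun q : Fin n × Fin n => f ((1 : Matrix (Fin n) (Fin n) F) q.1 q.2) + ε * f (B q.1 q.2)) =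
        fun q => ((1 : Matrix (Fin n) (Fin n) (DualNumber F)) + ε • B.map f) q.1 q.2 := by
    intro B
    funext q
    simp only [Matrix.add_apply, Matrix.smul_apply, Matrix.map_apply, smul_eq_mul]
    rw [← Matrix.map_apply (M := (1 : Matrix (Fin n) (Fin n) F)) (f := f),
      Matrix.map_one f (map_zero f) (map_one f)]
  have hconj : (g : Matrix (Fin n) (Fin n) F).map f * (1 + ε • A.map f) *
      ((g⁻¹ : GL (Fin n) F) : Matrix (Fin n) (Fin n) F).map f =
        1 + ε • ((g : Matrix (Fin n) (Fin n) F) * A * (g⁻¹ : GL (Fin n) F)).map f := by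
    rw [Matrix.mul_add, Matrix.add_mul, Matrix.mul_one, ← Matrix.map_mul, Units.mul_inv,
      Matrix.map_one f (map_zero f) (map_one f), Matrix.mul_smul, Matrix.smul_mul,
      Matrix.map_mul, Matrix.map_mul]
  intro p hp
  have h := hA _ (mulMulSubst_mem_vanishingIdealGL hp)
  rw [hpoint, eval_map, eval₂_mulMulSubst, hconj] at h
  rwa [hpoint, eval_map]

end LieAlgebra

section Roots

open Subgroup

variable {n : ℕ} {F : Type} [Field F]

theorem IsRootVec.map_conj {G T : Subgroup (GL (Fin n) F)} {g : GL (Fin n) F}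
    (hg : g ∈ normalizer (T : Set (GL (Fin n) F))) {m m' : Fin n → ℤ} (hm : IsRootVec G T m)
    (hm' : ∀ t ∈ T, chiVec m' t = chiVec m (g⁻¹ * t * g)) :
    IsRootVec (G.map (MulAut.conj g).toMonoidHom) T m' := by
  obtain ⟨⟨t₀, ht₀, hχ⟩, A, hA, hA0, hAt⟩ := hm
  have hgT : ∀ t ∈ T, g⁻¹ * t * g ∈ T := fun t ht =>
    (mem_normalizer_iff.1 hg _).2 (by simpa [mul_assoc] using ht)
  refine ⟨⟨g * t₀ * g⁻¹, (mem_normalizer_iff.1 hg t₀).1 ht₀, ?_⟩, _,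
    conj_mem_lieAlgOf_map_conj hA g, ?_, fun t ht => ?_⟩
  · rwa [hm' _ ((mem_normalizer_iff.1 hg t₀).1 ht₀),
      show g⁻¹ * (g * t₀ * g⁻¹) * g = t₀ by group]
  · rwa [ne_eq, (Units.isUnit _).mul_left_eq_zero, (Units.isUnit _).mul_right_eq_zero]
  · have ht' : (t : Matrix (Fin n) (Fin n) F) = g * ((g⁻¹ * t * g : GL (Fin n) F) :
        Matrix (Fin n) (Fin n) F) * (g⁻¹ : GL (Fin n) F) := by
      rw [← Units.val_mul, ← Units.val_mul]
      group
    rw [hm' t ht, ht']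
    simp only [Matrix.mul_assoc, Units.inv_mul_cancel_left]
    rw [← Matrix.mul_assoc _ A, hAt _ (hgT t ht), Matrix.smul_mul, Matrix.mul_smul]
    simp only [Matrix.mul_assoc]

end Roots

theorem zpow_sum₀ {M ι : Type*} [CommGroupWithZero M] {a : M} (ha : a ≠ 0) (s : Finset ι)
    (f : ι → ℤ) :
    a ^ (∑ i ∈ s, f i) = ∏ i ∈ s, a ^ f i := by
  classical
  induction s using Finset.induction_on with
  | empty => simp
  | insert i s hi ih => rw [Finset.sum_insert hi, Finset.prod_insert hi, zpow_add₀ ha, ih]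

section Characters

open Subgroup Finset

variable {n : ℕ} {F : Type} [Field F]

theorem Matrix.GeneralLinearGroup.exists_apply_ne_zero {R : Type} [CommRing R] [Nontrivial R]
    (g : GL (Fin n) R) (j : Fin n) : ∃ i, (g : Matrix (Fin n) (Fin n) R) i j ≠ 0 := by
  have h : ∑ i, ((g⁻¹ : GL (Fin n) R) : Matrix (Fin n) (Fin n) R) j i * g i j ≠ 0 := by
    rw [← Matrix.mul_apply, Units.inv_mul, Matrix.one_apply_eq]
    exact one_ne_zero
  obtain ⟨i, -, hi⟩ := exists_ne_zero_of_sum_ne_zero h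
  exact ⟨i, right_ne_zero_of_mul hi⟩

theorem Matrix.IsDiag.apply_ne_zero {R : Type} [CommRing R] [Nontrivial R] {t : GL (Fin n) R}
    (ht : (t : Matrix (Fin n) (Fin n) R).IsDiag) (i : Fin n) :
    (t : Matrix (Fin n) (Fin n) R) i i ≠ 0 := by
  have h : ((t : Matrix (Fin n) (Fin n) R) * (t⁻¹ : GL (Fin n) R)) i i = 1 := by
    rw [Units.mul_inv, Matrix.one_apply_eq]
  rw [← ht.diagonal_diag, Matrix.diagonal_mul] at h
  exact left_ne_zero_of_mul_eq_one h

theorem Matrix.IsDiag.apply_eq_of_mul_eq_mul {R : Type} [CommRing R] [IsDomain R]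
    {t s g : Matrix (Fin n) (Fin n) R} (ht : t.IsDiag) (hs : s.IsDiag) (h : t * g = g * s)
    {i j : Fin n} (hij : g i j ≠ 0) : s j j = t i i := by
  have hij' := congrFun (congrFun h i) j
  rw [← ht.diagonal_diag, ← hs.diagonal_diag, Matrix.diagonal_mul, Matrix.mul_diagonal] at hij'
  exact mul_left_cancel₀ hij (hij'.symm.trans (mul_comm _ _))

/-- Comparing entries of `t g = g (g⁻¹ t g)` shows that the `j`-th diagonal entry of `g⁻¹ t g`
is the `τ j`-th one of `t`, for any `τ` with `g (τ j) j ≠ 0`; so `g · m` is the pushforward of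
`m` along `τ`. -/
theorem exists_chiVec_eq_chiVec_conj {T : Subgroup (GL (Fin n) F)}
    (hdiag : ∀ t ∈ T, (t : Matrix (Fin n) (Fin n) F).IsDiag) {g : GL (Fin n) F}
    (hg : g ∈ normalizer (T : Set (GL (Fin n) F))) (m : Fin n → ℤ) :
    ∃ m' : Fin n → ℤ, ∀ t ∈ T, chiVec m' t = chiVec m (g⁻¹ * t * g) := by
  choose τ hτ using Matrix.GeneralLinearGroup.exists_apply_ne_zero g
  refine ⟨fun i => ∑ j with τ j = i, m j, fun t ht => ?_⟩
  have hconj : g⁻¹ * t * g ∈ T := (mem_normalizer_iff.1 hg _).2 (by simpa [mul_assoc] using ht)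
  have heig : ∀ j, ((g⁻¹ * t * g : GL (Fin n) F) : Matrix (Fin n) (Fin n) F) j j =
      (t : Matrix (Fin n) (Fin n) F) (τ j) (τ j) := by
    refine fun j => (hdiag t ht).apply_eq_of_mul_eq_mul (hdiag _ hconj) ?_ (hτ j)
    rw [← Units.val_mul, ← Units.val_mul, mul_assoc, mul_inv_cancel_left]
  simp only [chiVec, heig, zpow_sum₀ ((hdiag t ht).apply_ne_zero _)]
  rw [← prod_fiberwise univ τ fun j => (t : Matrix (Fin n) (Fin n) F) (τ j) (τ j) ^ m j]
  refine prod_congr rfl fun i _ => prod_congr rfl fun j hj => ?_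
  rw [(mem_filter.1 hj).2]

end Characters

/-- Let `G₁ ⊆ GL n ℂ` be a connected semisimple subgroup acting
irreducibly on `ℂⁿ`, with (diagonal) maximal torus `T` and root set `R`.  Suppose, for
every `g` in the normalizer `N_{GL_n(ℂ)}(T)`, the pair `(G₁, g G₁ g⁻¹)` (sharing the
formal character `T`) avoids the four exceptional coincidences of Larsen–Pink (the
exceptional coincidences, which involve spin and other specific representations, are
abstracted as a predicate `ExceptLP`, and the Larsen–Pink theorem itself is the
hypothesis `hLP`).  Then `g · R = R` for all `g ∈ N_{GL_n(ℂ)}(T)`: the invariance of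
roots condition holds. -/
theorem stmt17 {n : ℕ}
    (G₁ T : Subgroup (GL (Fin n) ℂ))
    (hclosed : IsClosedSub G₁) (hconn : IsConnectedSub G₁) (hss : IsSemisimpleSub G₁)
    (hirr : IrreducibleOn G₁)
    (hmax : IsMaximalTorusOf T G₁)
    (hdiag : ∀ t ∈ T, ((t : Matrix (Fin n) (Fin n) ℂ)).IsDiag)
    -- the Larsen–Pink exceptional coincidences, abstracted
    (ExceptLP : Subgroup (GL (Fin n) ℂ) → Subgroup (GL (Fin n) ℂ) → Prop)
    -- the Larsen–Pink theorem: two connected semisimple irreducible subgroups with the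
    -- same formal character have identical root sets unless an exception occurs
    (hLP : ∀ H H' : Subgroup (GL (Fin n) ℂ),
      IsClosedSub H → IsConnectedSub H → IsSemisimpleSub H → IrreducibleOn H →
      IsClosedSub H' → IsConnectedSub H' → IsSemisimpleSub H' → IrreducibleOn H' →
      IsMaximalTorusOf T H → IsMaximalTorusOf T H' → ¬ ExceptLP H H' →
      ∀ m : Fin n → ℤ, (IsRootVec H T m ↔ IsRootVec H' T m))
    -- the avoidance hypothesis
    (havoid : ∀ g ∈ Subgroup.normalizer (T : Set (GL (Fin n) ℂ)),
      ¬ ExceptLP G₁ (Subgroup.map (MulAut.conj g).toMonoidHom G₁)) :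
    ∀ g ∈ Subgroup.normalizer (T : Set (GL (Fin n) ℂ)), ∀ m : Fin n → ℤ, IsRootVec G₁ T m →
      ∃ m' : Fin n → ℤ, IsRootVec G₁ T m' ∧
        ∀ t ∈ T, chiVec m' t = chiVec m (g⁻¹ * t * g) := by
  intro g hg m hm
  obtain ⟨m', hm'⟩ := exists_chiVec_eq_chiVec_conj hdiag hg m
  have hLPg := hLP G₁ (G₁.map (MulAut.conj g).toMonoidHom) hclosed hconn hss hirr
    (hclosed.map_conj g) (hconn.map_conj g) (hss.map_conj g) (hirr.map_conj g) hmax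
    (hmax.map_conj hg) (havoid g hg) m'
  exact ⟨m', hLPg.2 (hm.map_conj hg hm'), hm'⟩
end
end
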